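/- Let {c_i}_{i=1}^{N_s} be vectors in a real inner product space H, and let P_V denote orthogonal projection onto a subspace V of dimension N. Then among all N-dimensional subspaces, the sum Σ_i ‖c_i − P_V c_i‖² is minimized by the span of the top N eigenvectors of the operator K(x) = Σ_i (c_i, x) c_i, and the minimal value equals the sum of the eigenvalues of K beyond the N-th (counted with multiplicity, in decreasing order). -/

import Mathlib

/-!
In the eigenbasis `v` of `K`, the energy `Σ_i ‖P_W c_i‖²` captured by any subspace `W` equals
`Σ_k μ_k ‖P_W v_k‖²`. Taking `W = Vᗮ`, the error of `V` is `Σ_k μ_k t_k` with weights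
`t_k = ‖P_{Vᗮ} v_k‖² ∈ [0, 1]` summing to `dim Vᗮ = m - N`. Such a weighted sum is smallest when
all the weight sits on the `m - N` smallest eigenvalues, which is what the span of the first `N`
eigenvectors achieves.
-/

open Module Submodule Finset
open scoped RealInnerProductSpace

section Projection

variable {E ι κ : Type*} [NormedAddCommGroup E] [InnerProductSpace ℝ E]

lemma Submodule.norm_starProjection_sq_eq_sum [Fintype ι] {W : Submodule ℝ E}
    [W.HasOrthogonalProjection] (w : OrthonormalBasis ι ℝ W) (x : E) :
    ‖W.starProjection x‖ ^ 2 = ∑ j, ⟪(w j : E), x⟫ ^ 2 := by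
  rw [starProjection_apply, norm_coe, ← w.sum_sq_inner_right]
  simp only [inner_orthogonalProjectionOnto_eq_of_mem_left]

lemma OrthonormalBasis.sum_norm_starProjection_sq [Fintype ι] [FiniteDimensional ℝ E]
    (b : OrthonormalBasis ι ℝ E) (W : Submodule ℝ E) :
    ∑ k, ‖W.starProjection (b k)‖ ^ 2 = finrank ℝ W := by
  let w := stdOrthonormalBasis ℝ W
  calc ∑ k, ‖W.starProjection (b k)‖ ^ 2 = ∑ j, ∑ k, ⟪(w j : E), b k⟫ ^ 2 := by
        rw [sum_comm]
        simp only [W.norm_starProjection_sq_eq_sum w]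
    _ = ∑ j, ‖(w j : E)‖ ^ 2 := sum_congr rfl fun j _ => b.sum_sq_inner_left _
    _ = finrank ℝ W := by simp only [norm_coe, w.norm_eq_one]; simp

lemma Orthonormal.starProjection_orthogonal_span_of_notMem [FiniteDimensional ℝ E] {v : ι → E}
    (hv : Orthonormal ℝ v) (f : κ → ι) {k : ι} (hk : k ∉ Set.range f) :
    (span ℝ (Set.range fun j => v (f j)))ᗮ.starProjection (v k) = v k := by
  refine starProjection_eq_self_iff.2 ((mem_orthogonal _ _).2 fun u hu => ?_)
  have hV : span ℝ (Set.range fun j => v (f j)) ≤ (ℝ ∙ v k)ᗮ :=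
    span_le.2 <| Set.range_subset_iff.2 fun j =>
      mem_orthogonal_singleton_iff_inner_right.2 (hv.2 fun h => hk ⟨j, h.symm⟩)
  exact inner_eq_zero_symm.1 (mem_orthogonal_singleton_iff_inner_right.1 (hV hu))

end Projection

section Covariance

variable {E ι κ : Type*} [NormedAddCommGroup E] [InnerProductSpace ℝ E] [Fintype ι] [Fintype κ]
  {c : ι → E} {b : OrthonormalBasis κ ℝ E} {μ : κ → ℝ}

lemma sum_inner_sq_eq_sum_mul_inner_sq (heig : ∀ k, ∑ i, ⟪c i, b k⟫ • c i = μ k • b k) (x : E) :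
    ∑ i, ⟪c i, x⟫ ^ 2 = ∑ k, μ k * ⟪b k, x⟫ ^ 2 := by
  have hK : ∀ k, ∑ i, ⟪c i, x⟫ * ⟪c i, b k⟫ = μ k * ⟪b k, x⟫ := fun k => by
    have := congr_arg (⟪x, ·⟫) (heig k)
    simp only [inner_sum, real_inner_smul_right] at this
    simpa only [real_inner_comm x, mul_comm] using this
  calc ∑ i, ⟪c i, x⟫ ^ 2 = ∑ i, ⟪c i, x⟫ * ∑ k, ⟪c i, b k⟫ * ⟪b k, x⟫ := by
        simp only [b.sum_inner_mul_inner, sq]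
    _ = ∑ k, (∑ i, ⟪c i, x⟫ * ⟪c i, b k⟫) * ⟪b k, x⟫ := by
        simp only [mul_sum, sum_mul, mul_assoc]
        exact sum_comm
    _ = ∑ k, μ k * ⟪b k, x⟫ ^ 2 := by simp only [hK, sq, mul_assoc]

variable [FiniteDimensional ℝ E]

lemma sum_norm_starProjection_sq_eq_sum_mul (heig : ∀ k, ∑ i, ⟪c i, b k⟫ • c i = μ k • b k)
    (W : Submodule ℝ E) :
    ∑ i, ‖W.starProjection (c i)‖ ^ 2 = ∑ k, μ k * ‖W.starProjection (b k)‖ ^ 2 := by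
  let w := stdOrthonormalBasis ℝ W
  calc ∑ i, ‖W.starProjection (c i)‖ ^ 2 = ∑ j, ∑ i, ⟪c i, (w j : E)⟫ ^ 2 := by
        rw [sum_comm]
        simp only [W.norm_starProjection_sq_eq_sum w, real_inner_comm (w _ : E)]
    _ = ∑ j, ∑ k, μ k * ⟪b k, (w j : E)⟫ ^ 2 := by
        simp only [sum_inner_sq_eq_sum_mul_inner_sq heig]
    _ = ∑ k, μ k * ‖W.starProjection (b k)‖ ^ 2 := by
        rw [sum_comm]
        simp only [W.norm_starProjection_sq_eq_sum w, real_inner_comm (w _ : E), mul_sum]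

lemma sum_norm_sub_starProjection_sq_eq_sum_mul (heig : ∀ k, ∑ i, ⟪c i, b k⟫ • c i = μ k • b k)
    (V : Submodule ℝ E) :
    ∑ i, ‖c i - V.starProjection (c i)‖ ^ 2 = ∑ k, μ k * ‖Vᗮ.starProjection (b k)‖ ^ 2 := by
  simp only [← starProjection_orthogonal_val]
  exact sum_norm_starProjection_sq_eq_sum_mul heig Vᗮ

end Covariance

lemma Finset.exists_forall_le_and_forall_le {ι : Type*} [Finite ι] (s : Finset ι) {μ : ι → ℝ}
    (hμ : ∀ i ∈ s, ∀ j ∉ s, μ i ≤ μ j) :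
    ∃ a, (∀ i ∈ s, μ i ≤ a) ∧ ∀ j ∉ s, a ≤ μ j := by
  rcases s.eq_empty_or_nonempty with rfl | hs
  · obtain ⟨a, ha⟩ := (Set.finite_range μ).bddBelow
    exact ⟨a, by simp, fun j _ => ha ⟨j, rfl⟩⟩
  · exact ⟨s.sup' hs μ, fun i hi => le_sup' μ hi, fun j hj => sup'_le hs μ fun i hi => hμ i hi j hj⟩

/- Lagrangian argument: a threshold `a` separating `μ` on `s` from `μ` off `s` gives termwise
bounds whose `a`-terms cancel because the total weight is `#s`. -/
lemma Finset.sum_le_sum_mul_of_le {ι : Type*} [Fintype ι] (s : Finset ι) {μ t : ι → ℝ}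
    (hμ : ∀ i ∈ s, ∀ j ∉ s, μ i ≤ μ j) (ht0 : ∀ i, 0 ≤ t i) (ht1 : ∀ i, t i ≤ 1)
    (ht : ∑ i, t i = #s) :
    ∑ i ∈ s, μ i ≤ ∑ i, μ i * t i := by
  classical
  obtain ⟨a, hs, hsc⟩ := s.exists_forall_le_and_forall_le hμ
  have h_in : ∑ i ∈ s, (μ i + a * (t i - 1)) ≤ ∑ i ∈ s, μ i * t i :=
    sum_le_sum fun i hi => by nlinarith [hs i hi, ht1 i]
  have h_out : ∑ i ∈ sᶜ, a * t i ≤ ∑ i ∈ sᶜ, μ i * t i :=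
    sum_le_sum fun i hi => by nlinarith [hsc i (by simpa using hi), ht0 i]
  have h_mass : ∑ i ∈ s, a * (t i - 1) + ∑ i ∈ sᶜ, a * t i = 0 := by
    rw [← mul_sum, ← mul_sum, ← mul_add, sum_sub_distrib, sub_add_eq_add_sub,
      sum_add_sum_compl, ht]
    simp
  rw [← sum_add_sum_compl s (fun i => μ i * t i)]
  rw [sum_add_distrib] at h_in
  linarith

lemma Fin.card_filter_le_val (m N : ℕ) : #{k : Fin m | N ≤ (k : ℕ)} = m - N := by
  simp only [← not_lt, filter_not, card_sdiff]
  simp only [inter_univ, card_univ, Fintype.card_fin, Fin.card_filter_val_lt]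
  omega

/-- POD optimality: the span of the top `N` eigenvectors of the snapshot covariance operator
`K x = Σ_i ⟪c_i, x⟫ c_i` minimizes the total squared projection error among all `N`-dimensional
subspaces, and the minimal value is the sum of the eigenvalues beyond the `N`-th. -/
theorem pod_optimality {m Ns N : ℕ} (hN : N ≤ m)
    (c : Fin Ns → EuclideanSpace ℝ (Fin m))
    (μ : Fin m → ℝ) (v : Fin m → EuclideanSpace ℝ (Fin m))
    (hv : Orthonormal ℝ v) (hμ : Antitone μ)
    -- `(v k, μ k)` are the eigenpairs of the covariance operator `K`, in decreasing order
    (heig : ∀ k, ∑ i, (inner ℝ (c i) (v k) : ℝ) • c i = μ k • v k) :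
    (∑ i, ‖c i - (Submodule.orthogonalProjectionOnto
        (Submodule.span ℝ (Set.range fun k : Fin N => v (Fin.castLE hN k))) (c i) :
        EuclideanSpace ℝ (Fin m))‖ ^ 2
      = ∑ k : Fin m, if N ≤ (k : ℕ) then μ k else 0) ∧
    ∀ V : Submodule ℝ (EuclideanSpace ℝ (Fin m)), finrank ℝ V = N →
      (∑ k : Fin m, if N ≤ (k : ℕ) then μ k else 0) ≤
        ∑ i, ‖c i - (Submodule.orthogonalProjectionOnto V (c i) : EuclideanSpace ℝ (Fin m))‖ ^ 2 := by
  let b := OrthonormalBasis.mk hv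
    (hv.linearIndependent.span_eq_top_of_card_eq_finrank' (by simp)).ge
  have hb : ⇑b = v := OrthonormalBasis.coe_mk _ _
  have herr := sum_norm_sub_starProjection_sq_eq_sum_mul (b := b) (by rwa [hb])
  simp only [← starProjection_apply, herr, hb]
  refine ⟨sum_congr rfl fun k _ => ?_, fun V hV => ?_⟩
  · by_cases hk : N ≤ (k : ℕ)
    · rw [hv.starProjection_orthogonal_span_of_notMem _ (by simpa [Fin.range_castLE] using hk),
        hv.1 k, if_pos hk, one_pow, mul_one]
    · have hmem : v k ∈ span ℝ (Set.range fun j : Fin N => v (Fin.castLE hN j)) :=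
        subset_span ⟨⟨k, by omega⟩, rfl⟩
      rw [starProjection_orthogonal_apply_eq_zero hmem, if_neg hk, norm_zero,
        zero_pow two_ne_zero, mul_zero]
  have hdim : finrank ℝ Vᗮ = m - N := by
    have := V.finrank_add_finrank_orthogonal
    rw [finrank_euclideanSpace_fin, hV] at this
    omega
  rw [← sum_filter]
  refine sum_le_sum_mul_of_le _ (fun i hi j hj => hμ ?_) (fun k => sq_nonneg _)
    (fun k => pow_le_one₀ (norm_nonneg _) (hv.1 k ▸ norm_starProjection_apply_le _ _)) ?_
  · simp only [mem_filter, mem_univ, true_and, not_le] at hi hj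
    exact Fin.le_def.2 (by omega)
  · rw [← hb, b.sum_norm_starProjection_sq, hdim, Fin.card_filter_le_val]
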